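/- arXiv:1805.03214 — 2 statements merged into one kernel-verified Lean document; each statement's English description precedes it below -/
import Mathlib

section
/- Let ψ₁, φ₁, φ₂ be real numbers with ψ₁ > 0, 2φ₁ − φ₂ > 0, −3φ₁ + 2φ₂ > 0, and suppose none of ψ₁ − 2φ₁ + φ₂, ψ₁ + φ₁ − φ₂, ψ₁ − φ₁ vanishes. Then the triple of signs (sign(ψ₁ − 2φ₁ + φ₂), sign(ψ₁ + φ₁ − φ₂), sign(ψ₁ − φ₁)) is one of exactly the four patterns (+,+,+), (+,+,−), (+,−,−), (−,−,−); moreover each of these four patterns is realized by some point of the cone. -/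
/-! On the cone the three forms are strictly decreasing, since their successive differences
are the chamber walls `-3φ₁ + 2φ₂` and `2φ₁ - φ₂`. A strictly decreasing triple of nonzero reals
can only change sign once, from `+` to `-`, which leaves the four listed patterns; they are
realized along the ray `(ψ₁; 2, 7/2)`, where the forms are `ψ₁ - 1/2`, `ψ₁ - 3/2`, `ψ₁ - 2`. -/

theorem sign_triple_mem_of_lt_of_lt {a b c : ℝ} (hba : b < a) (hcb : c < b)
    (ha : a ≠ 0) (hb : b ≠ 0) (hc : c ≠ 0) :
    (Real.sign a, Real.sign b, Real.sign c) ∈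
      ({(1, 1, 1), (1, 1, -1), (1, -1, -1), (-1, -1, -1)} : Set (ℝ × ℝ × ℝ)) := by
  rcases hc.lt_or_gt with hc | hc
  · rcases hb.lt_or_gt with hb | hb
    · rcases ha.lt_or_gt with ha | ha
      · simp [Real.sign_of_neg, ha, hb, hc]
      · simp [Real.sign_of_pos, Real.sign_of_neg, ha, hb, hc]
    · simp [Real.sign_of_pos, Real.sign_of_neg, hb.trans hba, hb, hc]
  · simp [Real.sign_of_pos, hc, hc.trans hcb, (hc.trans hcb).trans hba]

theorem stmt_1 :
    (∀ ψ₁ φ₁ φ₂ : ℝ,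
      ψ₁ > 0 → 2 * φ₁ - φ₂ > 0 → -3 * φ₁ + 2 * φ₂ > 0 →
      ψ₁ - 2 * φ₁ + φ₂ ≠ 0 → ψ₁ + φ₁ - φ₂ ≠ 0 → ψ₁ - φ₁ ≠ 0 →
      (Real.sign (ψ₁ - 2 * φ₁ + φ₂), Real.sign (ψ₁ + φ₁ - φ₂), Real.sign (ψ₁ - φ₁)) ∈
        ({(1, 1, 1), (1, 1, -1), (1, -1, -1), (-1, -1, -1)} : Set (ℝ × ℝ × ℝ))) ∧
    (∀ p ∈ ({(1, 1, 1), (1, 1, -1), (1, -1, -1), (-1, -1, -1)} : Set (ℝ × ℝ × ℝ)),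
      ∃ ψ₁ φ₁ φ₂ : ℝ,
        ψ₁ > 0 ∧ 2 * φ₁ - φ₂ > 0 ∧ -3 * φ₁ + 2 * φ₂ > 0 ∧
        (Real.sign (ψ₁ - 2 * φ₁ + φ₂), Real.sign (ψ₁ + φ₁ - φ₂), Real.sign (ψ₁ - φ₁)) = p) := by
  refine ⟨fun ψ₁ φ₁ φ₂ _ h₂ h₃ n₁ n₂ n₃ ↦
    sign_triple_mem_of_lt_of_lt (by linarith) (by linarith) n₁ n₂ n₃, ?_⟩
  rintro p (rfl | rfl | rfl | rfl)
  · exact ⟨3, 2, 7 / 2, by norm_num [Real.sign_of_pos]⟩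
  · exact ⟨7 / 4, 2, 7 / 2, by norm_num [Real.sign_of_pos, Real.sign_of_neg]⟩
  · exact ⟨1, 2, 7 / 2, by norm_num [Real.sign_of_pos, Real.sign_of_neg]⟩
  · exact ⟨1 / 4, 2, 7 / 2, by norm_num [Real.sign_of_pos, Real.sign_of_neg]⟩
end

section
/- Let K, S, T be elements of a commutative ℚ-algebra. Define h21 = 29K² + 15KS + 24KT + 3S² + 6ST + 6T² + 14, and define the charged hypermultiplet count nH_ch = 2·n₂₁ + 6·n₁₇ + 14·n₂₇ + 2·n₃₁ + 12·n₁₁₄, where n₂₇ = (1/2)ST, n₃₁ = (1/2)(KS + S² + 2), n₂₁ = −S(8K + 2S + (7/2)T), n₁₁₄ = (1/2)(KT + T² + 2), n₁₇ = −T(5K + S + 2T). Then nH := (h21 + 1) + nH_ch = 29K² + 29, and consequently nH − 17 + 29(9 − K²) − 273 = 0. -/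
theorem algebraMap_mul_natCast_eq_natCast {R : Type*} [Semiring R] [Algebra ℚ R]
    {q : ℚ} {n m : ℕ} (h : q * n = m) : algebraMap ℚ R q * n = m := by
  rw [← map_natCast (algebraMap ℚ R) n, ← map_mul, h, map_natCast]

theorem stmt_7 (R : Type*) [CommRing R] [Algebra ℚ R] (K S T : R)
    (n27 n31 n21 n114 n17 h21dim nHch nH : R)
    (h27 : n27 = ((1:ℚ)/2) • (S * T))
    (h31 : n31 = ((1:ℚ)/2) • (K * S + S ^ 2 + 2))
    (h21' : n21 = -(S * (8 * K + 2 * S + ((7:ℚ)/2) • T)))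
    (h114 : n114 = ((1:ℚ)/2) • (K * T + T ^ 2 + 2))
    (h17 : n17 = -(T * (5 * K + S + 2 * T)))
    (hh21 : h21dim = 29 * K ^ 2 + 15 * K * S + 24 * K * T + 3 * S ^ 2 + 6 * S * T + 6 * T ^ 2 + 14)
    (hch : nHch = 2 * n21 + 6 * n17 + 14 * n27 + 2 * n31 + 12 * n114)
    (hnH : nH = (h21dim + 1) + nHch) :
    nH = 29 * K ^ 2 + 29 ∧ nH - 17 + 29 * (9 - K ^ 2) - 273 = 0 := by
  have half : algebraMap ℚ R (1 / 2) * (2 : ℕ) = (1 : ℕ) :=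
    algebraMap_mul_natCast_eq_natCast (by norm_num)
  have sevenHalves : algebraMap ℚ R (7 / 2) * (2 : ℕ) = (7 : ℕ) :=
    algebraMap_mul_natCast_eq_natCast (by norm_num)
  have hnH_eq : nH = 29 * K ^ 2 + 29 := by
    subst h27 h31 h21' h114 h17 hh21 hch hnH
    simp only [Algebra.smul_def]
    push_cast at half sevenHalves
    linear_combination (7 * S * T + K * S + S ^ 2 + K * T + 6 * T ^ 2 + 5 * K * T + 14) * half
      - S * T * sevenHalves
  refine ⟨hnH_eq, ?_⟩
  rw [hnH_eq]
  ring
end
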